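/- arXiv:1311.3999 — 2 statements merged into one kernel-verified Lean document; each statement's English description precedes it below -/
import Mathlib

section
/- Let (X, μ) be a finite measure space, η : X → X a bijection which together with its inverse is measurable, and J : X → [0, ∞) a measurable function such that ∫ g(η(x)) J(x) dμ(x) = ∫ g(x) dμ(x) for every bounded measurable g : X → ℝ. Suppose f ∈ L²(X, μ; ℂ) satisfies f(η(x)) √(J(x)) = f(x) for μ-almost every x. Then the finite measure ν defined by ν(A) = ∫_A |f|² dμ is invariant under η, i.e. η is measure-preserving from (X, ν) to (X, ν). -/
/-!
The change-of-variables hypothesis, applied to indicators, says that `η` pushes `J dμ` forward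
to `μ`. Squaring the invariance equation gives `|f ∘ η|² J = |f|²` a.e., so
`|f|² dμ = |f ∘ η|² (J dμ)`, whose push-forward under `η` is `|f|² η_*(J dμ) = |f|² dμ`.
-/

open MeasureTheory

namespace MeasureTheory.Measure

variable {X Y : Type*} [MeasurableSpace X] [MeasurableSpace Y]

theorem withDensity_mul₀' {μ : Measure X} {f g : X → ENNReal} (hf : AEMeasurable f μ)
    (hg : AEMeasurable g (μ.withDensity f)) :
    μ.withDensity (f * g) = (μ.withDensity f).withDensity g := by
  ext1 s hs
  have hgs := hg.restrict (s := s)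
  rw [restrict_withDensity hs] at hgs
  rw [withDensity_apply _ hs, withDensity_apply _ hs, restrict_withDensity hs,
    lintegral_withDensity_eq_lintegral_mul₀' hf.restrict hgs]

theorem map_withDensity_comp {e : X → Y} (he : Measurable e) {κ : Measure X} {d : Y → ENNReal}
    (hd : AEMeasurable d (κ.map e)) :
    (κ.withDensity (d ∘ e)).map e = (κ.map e).withDensity d := by
  ext1 s hs
  have hds := hd.restrict (s := s)
  rw [restrict_map he hs] at hds
  rw [map_apply he hs, withDensity_apply _ (he hs), withDensity_apply _ hs, restrict_map he hs,
    lintegral_map' hds he.aemeasurable]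
  rfl

theorem map_withDensity_ofReal_eq {μ : Measure X} {ν : Measure Y} [IsFiniteMeasure ν]
    {e : X → Y} (he : Measurable e) {J : X → ℝ} (hJ : 0 ≤ᵐ[μ] J) (hJint : Integrable J μ)
    (h : ∀ s, MeasurableSet s → ∫ x in e ⁻¹' s, J x ∂μ = ν.real s) :
    (μ.withDensity fun x => ENNReal.ofReal (J x)).map e = ν := by
  ext1 s hs
  rw [map_apply he hs, withDensity_apply _ (he hs),
    ← ofReal_integral_eq_lintegral_ofReal hJint.restrict (ae_restrict_of_ae hJ), h s hs,
    ofReal_measureReal]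

end MeasureTheory.Measure

section

open Measure

variable {X Y : Type*} [MeasurableSpace X] [MeasurableSpace Y]

theorem measurePreserving_withDensity_of_comp_mul {μ : Measure X} {e : X → X} (he : Measurable e)
    {w d : X → ENNReal} (hw : AEMeasurable w μ) (hd : AEMeasurable d μ)
    (hmap : (μ.withDensity w).map e = μ) (hdw : ∀ᵐ x ∂μ, d (e x) * w x = d x) :
    MeasurePreserving e (μ.withDensity d) (μ.withDensity d) := by
  rw [← hmap] at hd
  have hde : AEMeasurable (d ∘ e) (μ.withDensity w) := hd.comp_aemeasurable he.aemeasurable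
  have hdens : μ.withDensity d = (μ.withDensity w).withDensity (d ∘ e) := by
    rw [← withDensity_mul₀' hw hde]
    exact withDensity_congr_ae (hdw.mono fun x hx => hx.symm.trans (mul_comm _ _))
  refine ⟨he, ?_⟩
  calc (μ.withDensity d).map e = ((μ.withDensity w).withDensity (d ∘ e)).map e := by rw [hdens]
    _ = ((μ.withDensity w).map e).withDensity d := map_withDensity_comp he hd
    _ = μ.withDensity d := by rw [hmap]

theorem integrable_of_integral_eq_measureReal_univ {μ : Measure X} [IsFiniteMeasure μ]
    {J : X → ℝ} (h : ∫ x, J x ∂μ = μ.real Set.univ) : Integrable J μ := by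
  by_contra hJ
  rw [integral_undef hJ, eq_comm, measureReal_eq_zero_iff, measure_univ_eq_zero] at h
  exact hJ (h ▸ integrable_zero_measure)

theorem setIntegral_preimage_eq_integral_indicator_comp_mul {μ : Measure X} {e : X → Y}
    (he : Measurable e) {s : Set Y} (hs : MeasurableSet s) (J : X → ℝ) :
    ∫ x in e ⁻¹' s, J x ∂μ = ∫ x, s.indicator 1 (e x) * J x ∂μ := by
  rw [← integral_indicator (he hs)]
  congr 1
  ext x
  by_cases hx : e x ∈ s <;> simp [Set.indicator, hx]

end

theorem invariant_function_gives_invariant_measure_general {X : Type*} [MeasurableSpace X]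
    (μ : Measure X) [IsFiniteMeasure μ] (η : X ≃ X) (hη : Measurable η)
    (J : X → ℝ) (hJnonneg : ∀ x, 0 ≤ J x)
    (hchange : ∀ g : X → ℝ, Measurable g → (∃ C : ℝ, ∀ x, |g x| ≤ C) →
      ∫ x, g (η x) * J x ∂μ = ∫ x, g x ∂μ)
    (f : X → ℂ) (hf : MemLp f 2 μ)
    (hinv : ∀ᵐ x ∂μ, f (η x) * (Real.sqrt (J x) : ℂ) = f x) :
    MeasurePreserving η (μ.withDensity fun x => ENNReal.ofReal (‖f x‖ ^ 2))
      (μ.withDensity fun x => ENNReal.ofReal (‖f x‖ ^ 2)) := by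
  have hJint : Integrable J μ := integrable_of_integral_eq_measureReal_univ <| by
    simpa using hchange 1 measurable_const ⟨1, by simp⟩
  have hmap : (μ.withDensity fun x => ENNReal.ofReal (J x)).map η = μ := by
    refine Measure.map_withDensity_ofReal_eq hη (ae_of_all _ hJnonneg) hJint fun s hs => ?_
    rw [setIntegral_preimage_eq_integral_indicator_comp_mul hη hs,
      hchange _ (measurable_one.indicator hs) ⟨1, fun x => ?_⟩, integral_indicator_one hs]
    by_cases hx : x ∈ s <;> simp [hx]
  have hdens : ∀ᵐ x ∂μ,
      ENNReal.ofReal (‖f (η x)‖ ^ 2) * ENNReal.ofReal (J x) = ENNReal.ofReal (‖f x‖ ^ 2) := by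
    filter_upwards [hinv] with x hx
    rw [← ENNReal.ofReal_mul (by positivity), ← hx, norm_mul, mul_pow, Complex.norm_real,
      Real.norm_of_nonneg (Real.sqrt_nonneg _), Real.sq_sqrt (hJnonneg x)]
  exact measurePreserving_withDensity_of_comp_mul hη hJint.aemeasurable.ennreal_ofReal
    (hf.aestronglyMeasurable.norm.aemeasurable.pow_const 2).ennreal_ofReal hmap hdens

/-- If `f ∈ L²` is an invariant function of the Perron–Frobenius operator,
`f(η x) √(J x) = f(x)` a.e., then the finite measure `|f|² dμ` is invariant
under `η`. -/
theorem invariant_function_gives_invariant_measure {X : Type*} [MeasurableSpace X]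
    (μ : Measure X) [IsFiniteMeasure μ] (η : X ≃ X) (hη : Measurable η)
    (hηinv : Measurable η.symm)
    (J : X → ℝ) (hJmeas : Measurable J) (hJnonneg : ∀ x, 0 ≤ J x)
    (hchange : ∀ g : X → ℝ, Measurable g → (∃ C : ℝ, ∀ x, |g x| ≤ C) →
      ∫ x, g (η x) * J x ∂μ = ∫ x, g x ∂μ)
    (f : X → ℂ) (hf : MemLp f 2 μ)
    (hinv : ∀ᵐ x ∂μ, f (η x) * (Real.sqrt (J x) : ℂ) = f x) :
    MeasurePreserving η (μ.withDensity fun x => ENNReal.ofReal (‖f x‖ ^ 2))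
      (μ.withDensity fun x => ENNReal.ofReal (‖f x‖ ^ 2)) :=
  invariant_function_gives_invariant_measure_general μ η hη J hJnonneg hchange f hf hinv
end

section
/- Let X be a separable metric space equipped with a finite Borel measure μ, let η : X → X be a Borel-measurable bijection with Borel-measurable inverse, and let J : X → [0, ∞) be measurable with ∫ g(η(x)) J(x) dμ(x) = ∫ g(x) dμ(x) for every bounded measurable g. Suppose there exists f ∈ L²(X, μ; ℂ), not μ-a.e. zero, with f(η(x)) √(J(x)) = f(x) for μ-almost every x. Then the set of recurrent points {x ∈ X : liminf_{k→∞} dist(η^k(x), x) = 0} has positive μ-measure. -/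
/-!
The change-of-variables identity says that `η` pushes the measure `J • μ` forward to `μ`.
Hence `ν = |f|² • μ` is `η`-invariant: by the invariance `|f ∘ η|² J = |f|²` of `f`, the
measure `ν` equals `(|f ∘ η|² J) • μ`, which `η` pushes forward to `|f|² • μ`. Since `f ∈ L²`
is nonzero, `ν` is finite and nonzero, so Poincaré recurrence makes `ν`-almost every point
recurrent, and `ν ≪ μ` transfers this to a set of positive `μ`-measure.
-/

open MeasureTheory Filter Topology
open scoped ENNReal

section ChangeOfVariables

variable {X : Type*} [MeasurableSpace X] {μ : Measure X} {η : X → X} {J : X → ℝ}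

theorem integrable_of_forall_integral_comp_mul_eq [IsFiniteMeasure μ]
    (hchange : ∀ g : X → ℝ, Measurable g → (∃ C : ℝ, ∀ x, |g x| ≤ C) →
      ∫ x, g (η x) * J x ∂μ = ∫ x, g x ∂μ) :
    Integrable J μ := by
  by_contra hJ
  have hone := hchange (fun _ => 1) measurable_const ⟨1, fun _ => by simp⟩
  simp only [one_mul, integral_undef hJ, integral_const, smul_eq_mul, mul_one] at hone
  have hμ : μ = 0 := by
    rw [← Measure.measure_univ_eq_zero, ← ofReal_measureReal, ← hone, ENNReal.ofReal_zero]
  subst hμ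
  exact hJ integrable_zero_measure

theorem map_withDensity_ofReal_eq_of_forall_integral_comp_mul_eq [IsFiniteMeasure μ]
    (hη : Measurable η) (hJnonneg : ∀ x, 0 ≤ J x)
    (hchange : ∀ g : X → ℝ, Measurable g → (∃ C : ℝ, ∀ x, |g x| ≤ C) →
      ∫ x, g (η x) * J x ∂μ = ∫ x, g x ∂μ) :
    (μ.withDensity fun x => ENNReal.ofReal (J x)).map η = μ := by
  ext A hA
  have hJA : ∫ x in η ⁻¹' A, J x ∂μ = μ.real A := by
    have hbound : ∀ x, |A.indicator (1 : X → ℝ) x| ≤ 1 := fun x => by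
      by_cases hx : x ∈ A <;> simp [hx]
    rw [← integral_indicator (hη hA), ← integral_indicator_one hA,
      ← hchange _ (measurable_one.indicator hA) ⟨1, hbound⟩]
    congr 1 with x
    by_cases hx : η x ∈ A <;> simp [hx]
  rw [Measure.map_apply hη hA, withDensity_apply _ (hη hA),
    ← ofReal_integral_eq_lintegral_ofReal
      (integrable_of_forall_integral_comp_mul_eq hchange).integrableOn (ae_of_all _ hJnonneg),
    hJA, ofReal_measureReal]

theorem map_withDensity_comp_eq {ρ : Measure X} (hη : Measurable η) (hmap : ρ.map η = μ)
    {D : X → ℝ≥0∞} (hD : Measurable D) :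
    (ρ.withDensity (D ∘ η)).map η = μ.withDensity D := by
  ext A hA
  rw [Measure.map_apply hη hA, withDensity_apply _ (hη hA), withDensity_apply _ hA, ← hmap,
    setLIntegral_map hA hD hη]
  rfl

theorem measurePreserving_withDensity_of_ae_eq_comp_mul (hη : Measurable η) (hJ : Measurable J)
    (hmap : (μ.withDensity fun x => ENNReal.ofReal (J x)).map η = μ)
    {D : X → ℝ≥0∞} (hD : Measurable D)
    (hDη : D =ᵐ[μ] fun x => D (η x) * ENNReal.ofReal (J x)) :
    MeasurePreserving η (μ.withDensity D) (μ.withDensity D) := by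
  refine ⟨hη, ?_⟩
  calc (μ.withDensity D).map η
      = ((μ.withDensity fun x => ENNReal.ofReal (J x)).withDensity (D ∘ η)).map η := by
        rw [withDensity_congr_ae hDη, ← withDensity_mul _ hJ.ennreal_ofReal (hD.comp hη)]
        simp only [Pi.mul_def, Function.comp_apply, mul_comm]
    _ = μ.withDensity D := map_withDensity_comp_eq hη hmap hD

theorem ae_comp_mul_sqrt_eq_of_ae_eq (hη : Measurable η) (hJ : Measurable J)
    (hmap : (μ.withDensity fun x => ENNReal.ofReal (J x)).map η = μ)
    {f F : X → ℂ} (hfF : f =ᵐ[μ] F)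
    (hinv : ∀ᵐ x ∂μ, f (η x) * (Real.sqrt (J x) : ℂ) = f x) :
    ∀ᵐ x ∂μ, F (η x) * (Real.sqrt (J x) : ℂ) = F x := by
  have hq : Measure.QuasiMeasurePreserving η (μ.withDensity fun x => ENNReal.ofReal (J x)) μ :=
    ⟨hη, by rw [hmap]⟩
  have hfFη : ∀ᵐ x ∂μ, 0 < J x → f (η x) = F (η x) := by
    filter_upwards [(ae_withDensity_iff hJ.ennreal_ofReal).1 (hq.ae_eq hfF)] with x hx hJx
    exact hx (ENNReal.ofReal_pos.2 hJx).ne'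
  -- where `J x = 0`, both sides of the identity vanish
  filter_upwards [hinv, hfF, hfFη] with x hx hfx hfηx
  by_cases hJx : 0 < J x
  · rw [← hfx, ← hx, hfηx hJx]
  · rw [← hfx, ← hx, Real.sqrt_eq_zero'.2 (not_lt.1 hJx)]
    simp

end ChangeOfVariables

theorem enorm_mul_sqrt_sq (z : ℂ) {t : ℝ} (ht : 0 ≤ t) :
    ‖z * (Real.sqrt t : ℂ)‖ₑ ^ 2 = ‖z‖ₑ ^ 2 * ENNReal.ofReal t := by
  rw [enorm_mul, mul_pow]
  congr 1
  rw [← ofReal_norm, Complex.norm_real, Real.norm_of_nonneg (Real.sqrt_nonneg t),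
    ← ENNReal.ofReal_pow (Real.sqrt_nonneg t), Real.sq_sqrt ht]

theorem liminf_eq_of_mapClusterPt_of_forall_le {ι : Type*} {l : Filter ι} {u : ι → ℝ} {a : ℝ}
    (h : MapClusterPt a l u) (ha : ∀ i, a ≤ u i) : liminf u l = a := by
  have hcobdd : IsCoboundedUnder (· ≥ ·) l u :=
    .of_frequently_le (mapClusterPt_iff_frequently.1 h _ (Iic_mem_nhds (lt_add_one a)))
  exact le_antisymm (h.liminf_le (isBoundedUnder_of ⟨a, ha⟩))
    (le_liminf_of_le hcobdd (Eventually.of_forall ha))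

theorem MeasureTheory.MeasurePreserving.ae_liminf_dist_iterate_eq_zero {X : Type*} [MetricSpace X]
    [SecondCountableTopology X] [MeasurableSpace X] [OpensMeasurableSpace X]
    {ν : Measure X} [IsFiniteMeasure ν] {η : X → X} (h : MeasurePreserving η ν ν) :
    ∀ᵐ x ∂ν, liminf (fun k => dist (η^[k] x) x) atTop = 0 := by
  filter_upwards [h.conservative.ae_frequently_mem_of_mem_nhds] with x hx
  have hdist := (mapClusterPt_iff_frequently.2 hx).continuousAt_comp
    (continuous_id.dist (continuous_const (y := x))).continuousAt
  rw [id, dist_self] at hdist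
  exact liminf_eq_of_mapClusterPt_of_forall_le hdist fun _ => dist_nonneg

theorem MeasureTheory.Measure.AbsolutelyContinuous.measure_setOf_pos {X : Type*} [MeasurableSpace X]
    {μ ν : Measure X} (hνμ : ν ≪ μ) (hν : ν ≠ 0) {p : X → Prop} (hp : ∀ᵐ x ∂ν, p x) :
    0 < μ {x | p x} := by
  rw [pos_iff_ne_zero]
  intro hμp
  have : NeBot (ae ν) := ae_neBot.2 hν
  obtain ⟨x, hpx, hnpx⟩ := (hp.and (hνμ.ae_le (measure_eq_zero_iff_ae_notMem.1 hμp))).exists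
  exact hnpx hpx

theorem invariant_function_gives_recurrence_general {X : Type*} [MetricSpace X]
    [TopologicalSpace.SeparableSpace X] [MeasurableSpace X] [BorelSpace X]
    (μ : Measure X) [IsFiniteMeasure μ] (η : X ≃ X) (hη : Measurable η)
    (J : X → ℝ) (hJmeas : Measurable J) (hJnonneg : ∀ x, 0 ≤ J x)
    (hchange : ∀ g : X → ℝ, Measurable g → (∃ C : ℝ, ∀ x, |g x| ≤ C) →
      ∫ x, g (η x) * J x ∂μ = ∫ x, g x ∂μ)
    (f : X → ℂ) (hf : MemLp f 2 μ) (hfne : ¬ f =ᵐ[μ] 0)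
    (hinv : ∀ᵐ x ∂μ, f (η x) * (Real.sqrt (J x) : ℂ) = f x) :
    0 < μ {x : X | Filter.liminf (fun k : ℕ => dist ((⇑η)^[k] x) x) Filter.atTop = 0} := by
  have hmap := map_withDensity_ofReal_eq_of_forall_integral_comp_mul_eq hη hJnonneg hchange
  obtain ⟨F, hFmeas, hfF⟩ := hf.1
  have hinvF := ae_comp_mul_sqrt_eq_of_ae_eq hη hJmeas hmap hfF hinv
  set D : X → ℝ≥0∞ := fun x => ‖F x‖ₑ ^ 2
  have hDmeas : Measurable D := hFmeas.measurable.enorm.pow_const 2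
  have hDη : D =ᵐ[μ] fun x => D (η x) * ENNReal.ofReal (J x) := by
    filter_upwards [hinvF] with x hx
    simp only [D, ← hx, enorm_mul_sqrt_sq _ (hJnonneg x)]
  have : IsFiniteMeasure (μ.withDensity D) := by
    refine isFiniteMeasure_withDensity ?_
    have := lintegral_rpow_enorm_lt_top_of_eLpNorm_lt_top two_ne_zero ENNReal.ofNat_ne_top
      (hf.ae_eq hfF).2
    simpa using this.ne
  have hD0 : μ.withDensity D ≠ 0 := by
    rw [Ne, withDensity_eq_zero_iff hDmeas.aemeasurable]
    refine fun hD => hfne ?_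
    filter_upwards [hD, hfF] with x hx hfx
    simpa [D, hfx] using hx
  have hνη := measurePreserving_withDensity_of_ae_eq_comp_mul hη hJmeas hmap hDmeas hDη
  exact (withDensity_absolutelyContinuous μ D).measure_setOf_pos hD0
    hνη.ae_liminf_dist_iterate_eq_zero

/-- If the Perron–Frobenius operator of `η` on a finite Borel measure space over a
separable metric space has a nontrivial invariant `L²` function, then the set of
points recurrent under `η` has positive measure. -/
theorem invariant_function_gives_recurrence {X : Type*} [MetricSpace X]
    [TopologicalSpace.SeparableSpace X] [MeasurableSpace X] [BorelSpace X]
    (μ : Measure X) [IsFiniteMeasure μ] (η : X ≃ X) (hη : Measurable η)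
    (hηinv : Measurable η.symm)
    (J : X → ℝ) (hJmeas : Measurable J) (hJnonneg : ∀ x, 0 ≤ J x)
    (hchange : ∀ g : X → ℝ, Measurable g → (∃ C : ℝ, ∀ x, |g x| ≤ C) →
      ∫ x, g (η x) * J x ∂μ = ∫ x, g x ∂μ)
    (f : X → ℂ) (hf : MemLp f 2 μ) (hfne : ¬ f =ᵐ[μ] 0)
    (hinv : ∀ᵐ x ∂μ, f (η x) * (Real.sqrt (J x) : ℂ) = f x) :
    0 < μ {x : X | Filter.liminf (fun k : ℕ => dist ((⇑η)^[k] x) x) Filter.atTop = 0} :=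
  invariant_function_gives_recurrence_general μ η hη J hJmeas hJnonneg hchange f hf hfne hinv
end
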